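/- arXiv:1402.4985 — 8 statements merged into one kernel-verified Lean document; each statement's English description precedes it below -/
import Mathlib

section
/- Let W be a finite-dimensional real inner product space, J an orthogonal complex structure on W, and S : W → W a self-adjoint linear map with S ∘ J = J ∘ S. Then there exists a monic real polynomial F of degree (dim W)/2 such that the characteristic polynomial of S equals F². -/
open Module RealInnerProductSpace Polynomial

/-- A finite-dimensional real vector space admitting an endomorphism squaring to `-1`
has even dimension. -/
lemma even_finrank_of_sq_eq_neg_one {V : Type*} [AddCommGroup V] [Module ℝ V]
    [FiniteDimensional ℝ V] (T : V →ₗ[ℝ] V) (hT : ∀ v, T (T v) = -v) :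
    Even (finrank ℝ V) := by
  have hcomp : T.comp T = -LinearMap.id := by
    ext v; simp [hT v]
  have hdet : LinearMap.det T * LinearMap.det T = (-1 : ℝ) ^ finrank ℝ V := by
    rw [← LinearMap.det_comp, hcomp]
    have : (-LinearMap.id : V →ₗ[ℝ] V) = (-1 : ℝ) • LinearMap.id := by
      ext v; simp
    rw [this, LinearMap.det_smul, LinearMap.det_id, mul_one]
  rcases Nat.even_or_odd (finrank ℝ V) with h | h
  · exact h
  · exfalso
    rw [h.neg_one_pow] at hdet
    nlinarith [sq_nonneg (LinearMap.det T), hdet]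

/-- If `S` is a self-adjoint endomorphism of a finite-dimensional real inner product
space `W` commuting with an orthogonal complex structure `J`, then the characteristic
polynomial of `S` is the square of a monic real polynomial of degree `dim W / 2`. -/
theorem charpoly_eq_sq_of_selfAdjoint_commutes
    {W : Type*} [NormedAddCommGroup W] [InnerProductSpace ℝ W] [FiniteDimensional ℝ W]
    (J : W →ₗᵢ[ℝ] W) (hJ : ∀ w, J (J w) = -w)
    (S : W →ₗ[ℝ] W)
    (hS : ∀ w w' : W, ⟪S w, w'⟫ = ⟪w, S w'⟫)
    (hSJ : ∀ w, S (J w) = J (S w)) :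
    ∃ F : Polynomial ℝ, F.Monic ∧ F.natDegree = finrank ℝ W / 2 ∧
      LinearMap.charpoly S = F ^ 2 := by
  classical
  have hSym : S.IsSymmetric := hS
  have hn : finrank ℝ W = finrank ℝ W := rfl
  set n := finrank ℝ W with hndef
  let b : OrthonormalBasis (Fin n) ℝ W := hSym.eigenvectorBasis hn
  let μ : Fin n → ℝ := hSym.eigenvalues hn
  -- the matrix of S in the eigenvector basis is diagonal
  have hrepr : ∀ i j : Fin n, b.toBasis.repr (b j) i = if j = i then 1 else 0 := by
    intro i j
    rw [show (b j : W) = b.toBasis j from (congrFun b.coe_toBasis j).symm,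
      Basis.repr_self, Finsupp.single_apply]
  have hmat : LinearMap.toMatrix b.toBasis b.toBasis S = Matrix.diagonal μ := by
    ext i j
    rw [LinearMap.toMatrix_apply, OrthonormalBasis.coe_toBasis,
      hSym.apply_eigenvectorBasis hn j, map_smul]
    simp only [RCLike.ofReal_real_eq_id, id, Finsupp.smul_apply, smul_eq_mul, hrepr]
    rw [show b.toBasis.repr ((hSym.eigenvectorBasis hn) j) i = if j = i then 1 else 0 from hrepr i j]
    rcases eq_or_ne i j with rfl | hij
    · simp [μ]
    · rw [if_neg (Ne.symm hij), mul_zero, Matrix.diagonal_apply_ne _ hij]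
  -- hence the characteristic polynomial is the product of linear factors
  have hcp : LinearMap.charpoly S = ∏ i, (X - C (μ i)) := by
    rw [← LinearMap.charpoly_toMatrix S b.toBasis, hmat]
    have hchar : (Matrix.diagonal μ).charmatrix
        = Matrix.diagonal (fun i => (X : ℝ[X]) - C (μ i)) := by
      ext i j
      rcases eq_or_ne i j with rfl | hij
      · simp [Matrix.charmatrix_apply_eq]
      · simp [Matrix.charmatrix_apply_ne _ _ _ hij, Matrix.diagonal_apply_ne _ hij]
    rw [Matrix.charpoly, hchar, Matrix.det_diagonal]
  -- regroup by eigenvalue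
  set T : Finset ℝ := Finset.image μ Finset.univ with hT
  have hre : (∏ i, (X - C (μ i)))
      = ∏ c ∈ T, (X - C c) ^ (Finset.univ.filter (fun i => μ i = c)).card := by
    rw [← Finset.prod_fiberwise_of_maps_to
        (fun i _ => Finset.mem_image_of_mem μ (Finset.mem_univ i)) (fun i => X - C (μ i))]
    refine Finset.prod_congr rfl fun c _ => ?_
    rw [Finset.prod_congr rfl (fun i hi => by
      rw [(Finset.mem_filter.mp hi).2]), Finset.prod_const]
  -- each fiber has even cardinality
  have heven : ∀ c ∈ T, Even (Finset.univ.filter (fun i => μ i = c)).card := by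
    intro c _
    set A : Finset (Fin n) := Finset.univ.filter (fun i => μ i = c) with hA
    set E : Submodule ℝ W := Module.End.eigenspace S c with hE
    -- E = span of the eigenbasis vectors in the fiber
    have hsub : ∀ i ∈ A, b i ∈ E := by
      intro i hi
      have hc : μ i = c := (Finset.mem_filter.mp hi).2
      rw [hE, Module.End.mem_eigenspace_iff, hSym.apply_eigenvectorBasis hn i]
      simp only [RCLike.ofReal_real_eq_id, id]
      exact congrArg (fun t : ℝ => t • b i) hc
    have hspan : E = Submodule.span ℝ (b '' (A : Set (Fin n))) := by
      apply le_antisymm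
      · intro v hv
        have hcoef : ∀ i, i ∉ A → b.repr v i = 0 := by
          intro i hi
          have h1 : b.repr (S v) i = μ i * b.repr v i :=
            hSym.eigenvectorBasis_apply_self_apply hn v i
          have h2 : S v = c • v := Module.End.mem_eigenspace_iff.mp hv
          rw [h2, map_smul] at h1
          have hne : μ i ≠ c := by
            simpa [hA] using hi
          have : (μ i - c) * b.repr v i = 0 := by
            simp only [map_smul, Finsupp.smul_apply, smul_eq_mul, PiLp.smul_apply, Pi.smul_apply,
              RCLike.ofReal_real_eq_id, id] at h1
            linear_combination -h1
          rcases mul_eq_zero.mp this with h | h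
          · exact absurd (by linarith : μ i = c) hne
          · exact h
        have hv' : v = ∑ i ∈ A, b.repr v i • b i := by
          conv_lhs => rw [← b.sum_repr v]
          rw [← Finset.sum_subset (Finset.subset_univ A)]
          intro i _ hi
          rw [hcoef i hi, zero_smul]
        rw [hv']
        exact Submodule.sum_mem _ fun i hi =>
          Submodule.smul_mem _ _ (Submodule.subset_span ⟨i, hi, rfl⟩)
      · rw [Submodule.span_le]
        rintro _ ⟨i, hi, rfl⟩
        exact hsub i hi
    have hcard : finrank ℝ E = A.card := by
      rw [hspan]
      have hli : LinearIndependent ℝ (fun i : (A : Set (Fin n)) => b i) :=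
        b.toBasis.linearIndependent.comp _ Subtype.val_injective
      have := finrank_span_eq_card hli
      rw [show Set.range (fun i : (A : Set (Fin n)) => b i) = b '' (A : Set (Fin n)) by
        ext x; simp] at this
      rw [this]
      simp
    rw [← hcard]
    -- J restricts to E and squares to -1 there
    have hJE : ∀ x ∈ E, J x ∈ E := by
      intro x hx
      rw [hE, Module.End.mem_eigenspace_iff] at hx ⊢
      rw [hSJ x, hx, map_smul]
    have hres := even_finrank_of_sq_eq_neg_one
      (V := E) (J.toLinearMap.restrict hJE) ?_
    · exact hres
    · intro v
      apply Subtype.ext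
      simp [LinearMap.restrict_apply, hJ]
  -- construct F
  set F : Polynomial ℝ :=
    ∏ c ∈ T, (X - C c) ^ ((Finset.univ.filter (fun i => μ i = c)).card / 2) with hF
  have hFmonic : F.Monic :=
    Polynomial.monic_prod_of_monic _ _ fun c _ => (monic_X_sub_C c).pow _
  have hFsq : LinearMap.charpoly S = F ^ 2 := by
    rw [hcp, hre, hF, ← Finset.prod_pow]
    refine Finset.prod_congr rfl fun c hc => ?_
    rw [← pow_mul]
    congr 1
    obtain ⟨k, hk⟩ := heven c hc
    omega
  refine ⟨F, hFmonic, ?_, hFsq⟩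
  have hdeg : (LinearMap.charpoly S).natDegree = n := LinearMap.charpoly_natDegree S
  rw [hFsq, hFmonic.natDegree_pow] at hdeg
  omega
end

section
/- Let W be a finite-dimensional real inner product space, J an orthogonal complex structure on W, and S : W → W a self-adjoint linear map with S ∘ J = J ∘ S. Then the determinant of S is the square of a real number, i.e. there exists r ∈ ℝ with det S = r². -/
open Module RealInnerProductSpace

open Finset in
lemma prod_sq_of_even_fibers {n : ℕ} (f : Fin n → ℝ)
    (h : ∀ t : ℝ, Even ((univ.filter (fun i => f i = t)).card)) :
    ∃ r : ℝ, ∏ i, f i = r ^ 2 := by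
  classical
  have := Finset.prod_fiberwise_of_maps_to
    (fun x (_ : x ∈ (univ : Finset (Fin n))) => Finset.mem_image_of_mem f (Finset.mem_univ x)) f
  refine ⟨∏ t ∈ univ.image f, t ^ ((univ.filter (fun i => f i = t)).card / 2), ?_⟩
  rw [← this, ← Finset.prod_pow]
  refine Finset.prod_congr rfl fun t _ => ?_
  have hcongr : ∏ i ∈ univ.filter (fun i => f i = t), f i
      = t ^ (univ.filter (fun i => f i = t)).card := by
    rw [← Finset.prod_const]
    exact Finset.prod_congr rfl fun i hi => (Finset.mem_filter.mp hi).2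
  rw [hcongr, ← pow_mul]
  obtain ⟨m, hm⟩ := h t
  rw [hm]
  congr 1
  omega

lemma even_finrank_of_complex_structure {E : Type*} [AddCommGroup E] [Module ℝ E]
    [FiniteDimensional ℝ E] (J : E →ₗ[ℝ] E) (hJ : ∀ x, J (J x) = -x) :
    Even (finrank ℝ E) := by
  have h1 : J ∘ₗ J = (-1 : ℝ) • LinearMap.id := by
    ext x; simp [hJ]
  have h2 : (LinearMap.det J) ^ 2 = (-1 : ℝ) ^ finrank ℝ E := by
    rw [sq, ← LinearMap.det_comp, h1, LinearMap.det_smul, LinearMap.det_id, mul_one]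
  rw [← Nat.not_odd_iff_even]
  intro hodd
  rw [Odd.neg_one_pow hodd] at h2
  nlinarith [sq_nonneg (LinearMap.det J)]


open Finset in
/-- If `S` is a self-adjoint endomorphism of a finite-dimensional real inner product
space `W` commuting with an orthogonal complex structure `J`, then `det S` is a square. -/
theorem det_isSquare_of_selfAdjoint_commutes
    {W : Type*} [NormedAddCommGroup W] [InnerProductSpace ℝ W] [FiniteDimensional ℝ W]
    (J : W →ₗᵢ[ℝ] W) (hJ : ∀ w, J (J w) = -w)
    (S : W →ₗ[ℝ] W)
    (hS : ∀ w w' : W, ⟪S w, w'⟫ = ⟪w, S w'⟫)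
    (hSJ : ∀ w, S (J w) = J (S w)) :
    ∃ r : ℝ, LinearMap.det S = r ^ 2 := by
  classical
  have hT : S.IsSymmetric := hS
  have hnn : finrank ℝ W = finrank ℝ W := rfl
  set n := finrank ℝ W
  let b := hT.eigenvectorBasis hnn
  let μ := hT.eigenvalues hnn
  -- Step 1 : det S = ∏ μ i
  have hdiag : LinearMap.toMatrix b.toBasis b.toBasis S = Matrix.diagonal μ := by
    ext i j
    rw [LinearMap.toMatrix_apply]
    simp only [OrthonormalBasis.coe_toBasis, hT.apply_eigenvectorBasis hnn j,
      map_smul, OrthonormalBasis.coe_toBasis_repr_apply, OrthonormalBasis.repr_self,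
      EuclideanSpace.single_apply, Matrix.diagonal, Matrix.of_apply, smul_eq_mul]
    by_cases h : i = j <;> simp [h, b, μ, hT.apply_eigenvectorBasis hnn j]
  have hdet : LinearMap.det S = ∏ i, μ i := by
    rw [← LinearMap.det_toMatrix b.toBasis, hdiag, Matrix.det_diagonal]
  -- Step 2 : each eigenspace has even dimension
  have heig_even : ∀ t : ℝ, Even (finrank ℝ (Module.End.eigenspace S t)) := by
    intro t
    set E := Module.End.eigenspace S t with hE
    have hJE : ∀ x ∈ E, J.toLinearMap x ∈ E := by
      intro x hx
      rw [hE, Module.End.mem_eigenspace_iff] at hx ⊢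
      show S (J x) = t • J x
      rw [hSJ, hx, map_smul]
    refine even_finrank_of_complex_structure (J.toLinearMap.restrict hJE) fun x => ?_
    ext
    simp [LinearMap.restrict_apply, hJ]
  -- Step 3 : fibers of μ have even cardinality
  have hfiber : ∀ t : ℝ, Even ((univ.filter (fun i => μ i = t)).card) := by
    intro t
    set E := Module.End.eigenspace S t with hE
    set F := univ.filter (fun i => μ i = t) with hF
    have hmem : ∀ i ∈ F, b i ∈ E := by
      intro i hi
      have h1 := (hT.hasEigenvector_eigenvectorBasis hnn i).1
      have h2 : μ i = t := (Finset.mem_filter.mp hi).2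
      show b i ∈ Module.End.eigenspace S t
      rw [← h2]
      exact h1
    -- card F ≤ finrank E
    have hle1 : F.card ≤ finrank ℝ E := by
      have hli : LinearIndependent ℝ (fun i : F => (⟨b i, hmem i i.2⟩ : E)) := by
        apply LinearIndependent.of_comp E.subtype
        have : (E.subtype ∘ fun i : F => (⟨b i, hmem i i.2⟩ : E)) =
            (fun i : F => b.toBasis i) := by
          ext i; simp
        rw [this]
        exact b.toBasis.linearIndependent.comp _ Subtype.val_injective
      simpa [Fintype.card_coe] using hli.fintype_card_le_finrank
    -- finrank E ≤ card F
    have hle2 : finrank ℝ E ≤ F.card := by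
      have hspan : E ≤ Submodule.span ℝ ((F.image fun i => b.toBasis i : Finset W) : Set W) := by
        intro v hv
        rw [hE, Module.End.mem_eigenspace_iff] at hv
        have hcoeff : ∀ i, i ∉ F → b.toBasis.repr v i = 0 := by
          intro i hi
          have h1 : b.repr (S v) i = μ i * b.repr v i :=
            hT.eigenvectorBasis_apply_self_apply hnn v i
          rw [hv, map_smul] at h1
          have h2 : μ i ≠ t := by
            intro h; exact hi (Finset.mem_filter.mpr ⟨Finset.mem_univ i, h⟩)
          have : (t - μ i) * b.repr v i = 0 := by
            have := h1
            simp only [PiLp.smul_apply, smul_eq_mul] at this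
            ring_nf
            ring_nf at this
            linarith
          have h3 := mul_eq_zero.mp this
          rcases h3 with h3 | h3
          · exact absurd (by linarith : μ i = t) h2
          · simpa [OrthonormalBasis.coe_toBasis_repr_apply] using h3
        have hsupp : ((b.toBasis.repr v).support : Set (Fin n)) ⊆ (F : Set (Fin n)) := by
          intro i hi
          by_contra h
          exact (Finsupp.mem_support_iff.mp hi) (hcoeff i h)
        refine Submodule.span_mono ?_ (b.toBasis.mem_span_repr_support v)
        rw [Finset.coe_image]
        exact Set.image_mono hsupp
      calc finrank ℝ E ≤ finrank ℝ (Submodule.span ℝ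
            ((F.image fun i => b.toBasis i : Finset W) : Set W)) := Submodule.finrank_mono hspan
        _ ≤ (F.image fun i => b.toBasis i).card := finrank_span_finset_le_card _
        _ ≤ F.card := Finset.card_image_le
    have : F.card = finrank ℝ E := le_antisymm hle1 hle2
    rw [hF] at this ⊢
    rw [this]
    exact heig_even t
  rw [hdet]
  exact prod_sq_of_even_fibers μ hfiber
end

section
/- Let W be a real inner product space, J an orthogonal complex structure on W, and S : W → W a linear map. Then S ∘ J = J ∘ S if and only if for all w, w′ ∈ W the function θ ↦ ⟨S(cos θ · w + sin θ · J w), cos θ · w′ + sin θ · J w′⟩ is constant in θ. -/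
open RealInnerProductSpace Real

/-- A linear map `S` on a real inner product space with orthogonal complex structure `J`
commutes with `J` if and only if for all `w, w'` the function
`θ ↦ ⟪S (cos θ • w + sin θ • J w), cos θ • w' + sin θ • J w'⟫` is constant in `θ`. -/
theorem commutes_iff_theta_invariant
    {W : Type*} [NormedAddCommGroup W] [InnerProductSpace ℝ W]
    (J : W →ₗᵢ[ℝ] W) (hJ : ∀ w, J (J w) = -w)
    (S : W →ₗ[ℝ] W) :
    (∀ w, S (J w) = J (S w)) ↔
      ∀ (w w' : W) (θ₁ θ₂ : ℝ),
        ⟪S (cos θ₁ • w + sin θ₁ • J w), cos θ₁ • w' + sin θ₁ • J w'⟫ =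
        ⟪S (cos θ₂ • w + sin θ₂ • J w), cos θ₂ • w' + sin θ₂ • J w'⟫ := by
  have hadj : ∀ u v : W, ⟪J u, v⟫ = -⟪u, J v⟫ := by
    intro u v
    have h := J.inner_map_map u (J v)
    rw [hJ, inner_neg_right] at h
    linarith
  have expand : ∀ (w w' : W) (θ : ℝ),
      ⟪S (cos θ • w + sin θ • J w), cos θ • w' + sin θ • J w'⟫ =
        cos θ * cos θ * ⟪S w, w'⟫ + cos θ * sin θ * ⟪S w, J w'⟫ +
        sin θ * cos θ * ⟪S (J w), w'⟫ + sin θ * sin θ * ⟪S (J w), J w'⟫ := by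
    intro w w' θ
    simp [map_add, map_smul, inner_add_left, inner_add_right, inner_smul_left,
      inner_smul_right]
    ring
  constructor
  · intro hc w w' θ₁ θ₂
    have h1 : ⟪S (J w), J w'⟫ = ⟪S w, w'⟫ := by rw [hc, J.inner_map_map]
    have h2 : ⟪S (J w), w'⟫ = -⟪S w, J w'⟫ := by rw [hc, hadj]
    rw [expand, expand, h1, h2]
    linear_combination (⟪S w, w'⟫ : ℝ) * (sin_sq_add_cos_sq θ₁) -
      (⟪S w, w'⟫ : ℝ) * (sin_sq_add_cos_sq θ₂)
  · intro h w
    apply ext_inner_right ℝ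
    intro v
    have hAD := h w v 0 (π / 2)
    rw [expand, expand] at hAD
    simp at hAD
    have hBC := h w v (π / 4) 0
    rw [expand, expand] at hBC
    simp [cos_pi_div_four, sin_pi_div_four] at hBC
    have hs : Real.sqrt 2 / 2 * (Real.sqrt 2 / 2) = 1 / 2 := by
      rw [div_mul_div_comm, Real.mul_self_sqrt (by norm_num)]
      norm_num
    rw [hs] at hBC
    rw [hadj (S w) v]
    linarith [hBC, hAD]
end

section
/- Let 𝔰 be the 5-dimensional metric Lie algebra with orthonormal basis {A, X₁, X₂, X₃, X₄} and brackets [X₁,X₂] = √(2/3)·X₃, [X₁,X₃] = √(2/3)·X₄, [A,Xⱼ] = (j/√30)·Xⱼ for j = 1,2,3,4, all other basis brackets zero. Set 𝔳 = span{A, X₂, X₄} and 𝔥 = span{X₁, X₃}. Then: (a) 𝔳 is a Lie subalgebra of 𝔰; (b) the totally geodesic condition holds, i.e. ⟨[X,U],V⟩ + ⟨[X,V],U⟩ = 0 for all U, V ∈ 𝔳 and X ∈ 𝔥; (c) the conformal condition fails, i.e. there is no linear functional ν on 𝔳 such that ⟨[V,X],Y⟩ + ⟨[V,Y],X⟩ =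 −2ν(V)⟨X,Y⟩ for all V ∈ 𝔳 and X, Y ∈ 𝔥. -/
open RealInnerProductSpace

/-- The standard orthonormal basis `{A, X₁, X₂, X₃, X₄}` of the 5-dimensional
solvable Einstein Lie algebra of Example 4.1: `e 0 = A`, `e j = Xⱼ` for `j = 1,…,4`. -/
noncomputable def ex41basis : Fin 5 → EuclideanSpace ℝ (Fin 5) :=
  fun i => EuclideanSpace.single i 1

lemma ex41basis_ortho (i j : Fin 5) : ⟪ex41basis i, ex41basis j⟫ = if i = j then 1 else 0 := by
  simp [ex41basis, EuclideanSpace.inner_single_left, EuclideanSpace.single_apply, eq_comm]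

/-- In the 5-dimensional solvable Einstein Lie algebra `𝔰` with orthonormal basis
`{A, X₁, X₂, X₃, X₄}` and brackets `[X₁,X₂] = √(2/3) X₃`, `[X₁,X₃] = √(2/3) X₄`,
`[A,Xⱼ] = (j/√30) Xⱼ`, all other basis brackets zero, the decomposition
`𝔳 = span{A, X₂, X₄}`, `𝔥 = span{X₁, X₃}` satisfies: (a) `𝔳` is a subalgebra,
(b) the totally geodesic condition holds, (c) the conformal condition fails. -/
theorem ex41_totGeod_notConformal
    (br : EuclideanSpace ℝ (Fin 5) →ₗ[ℝ] EuclideanSpace ℝ (Fin 5) →ₗ[ℝ]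
      EuclideanSpace ℝ (Fin 5))
    (halt : ∀ x, br x x = 0)
    (hjac : ∀ x y z, br (br x y) z + br (br y z) x + br (br z x) y = 0)
    (h12 : br (ex41basis 1) (ex41basis 2) = Real.sqrt (2/3) • ex41basis 3)
    (h13 : br (ex41basis 1) (ex41basis 3) = Real.sqrt (2/3) • ex41basis 4)
    (h14 : br (ex41basis 1) (ex41basis 4) = 0)
    (h23 : br (ex41basis 2) (ex41basis 3) = 0)
    (h24 : br (ex41basis 2) (ex41basis 4) = 0)
    (h34 : br (ex41basis 3) (ex41basis 4) = 0)
    (hA : ∀ j : Fin 5, 1 ≤ (j : ℕ) →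
      br (ex41basis 0) (ex41basis j) = (((j : ℕ) : ℝ) / Real.sqrt 30) • ex41basis j) :
    let 𝔳 : Submodule ℝ (EuclideanSpace ℝ (Fin 5)) :=
      Submodule.span ℝ {ex41basis 0, ex41basis 2, ex41basis 4}
    let 𝔥 : Submodule ℝ (EuclideanSpace ℝ (Fin 5)) :=
      Submodule.span ℝ {ex41basis 1, ex41basis 3}
    -- (a) 𝔳 is a Lie subalgebra
    (∀ u ∈ 𝔳, ∀ v ∈ 𝔳, br u v ∈ 𝔳) ∧
    -- (b) totally geodesic condition
    (∀ u ∈ 𝔳, ∀ v ∈ 𝔳, ∀ x ∈ 𝔥, ⟪br x u, v⟫ + ⟪br x v, u⟫ = 0) ∧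
    -- (c) conformal condition fails
    ¬ ∃ ν : 𝔳 →ₗ[ℝ] ℝ, ∀ v : 𝔳, ∀ x ∈ 𝔥, ∀ y ∈ 𝔥,
        ⟪br (v : EuclideanSpace ℝ (Fin 5)) x, y⟫ +
          ⟪br (v : EuclideanSpace ℝ (Fin 5)) y, x⟫ = -2 * ν v * ⟪x, y⟫ := by
  intro 𝔳 𝔥
  have banti : ∀ x y, br x y = - br y x := by
    intro x y
    have h := halt (x + y)
    simp only [map_add, LinearMap.add_apply, halt, zero_add, add_zero] at h
    exact eq_neg_of_add_eq_zero_right h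
  -- bracket table
  have h01 : br (ex41basis 0) (ex41basis 1) = (1 / Real.sqrt 30) • ex41basis 1 := by
    have := hA 1 (by norm_num); norm_num at this ⊢; exact this
  have h02 : br (ex41basis 0) (ex41basis 2) = (2 / Real.sqrt 30) • ex41basis 2 := by
    have := hA 2 (by norm_num); norm_num at this ⊢; exact this
  have h03 : br (ex41basis 0) (ex41basis 3) = (3 / Real.sqrt 30) • ex41basis 3 := by
    have := hA 3 (by decide); norm_num at this ⊢; exact this
  have h04 : br (ex41basis 0) (ex41basis 4) = (4 / Real.sqrt 30) • ex41basis 4 := by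
    have := hA 4 (by decide); norm_num at this ⊢; exact this
  have h10 : br (ex41basis 1) (ex41basis 0) = -((1 / Real.sqrt 30) • ex41basis 1) := by
    rw [banti, h01]
  have h30 : br (ex41basis 3) (ex41basis 0) = -((3 / Real.sqrt 30) • ex41basis 3) := by
    rw [banti, h03]
  have h20 : br (ex41basis 2) (ex41basis 0) = -((2 / Real.sqrt 30) • ex41basis 2) := by
    rw [banti, h02]
  have h40 : br (ex41basis 4) (ex41basis 0) = -((4 / Real.sqrt 30) • ex41basis 4) := by
    rw [banti, h04]
  have h32 : br (ex41basis 3) (ex41basis 2) = 0 := by rw [banti, h23, neg_zero]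
  have h42 : br (ex41basis 4) (ex41basis 2) = 0 := by rw [banti, h24, neg_zero]
  have h34' : br (ex41basis 3) (ex41basis 4) = 0 := h34
  have h43 : br (ex41basis 4) (ex41basis 3) = 0 := by rw [banti, h34, neg_zero]
  -- memberships
  have me0 : ex41basis 0 ∈ 𝔳 := Submodule.subset_span (by simp)
  have me2 : ex41basis 2 ∈ 𝔳 := Submodule.subset_span (by simp)
  have me4 : ex41basis 4 ∈ 𝔳 := Submodule.subset_span (by simp)
  have me1 : ex41basis 1 ∈ 𝔥 := Submodule.subset_span (by simp)
  have me3 : ex41basis 3 ∈ 𝔥 := Submodule.subset_span (by simp)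
  -- representations
  have rep𝔥 : ∀ z ∈ 𝔥, ∃ p q : ℝ, z = p • ex41basis 1 + q • ex41basis 3 := by
    intro z hz
    rw [show 𝔥 = Submodule.span ℝ {ex41basis 1, ex41basis 3} from rfl,
      Submodule.mem_span_pair] at hz
    obtain ⟨p, q, h⟩ := hz
    exact ⟨p, q, h.symm⟩
  have rep𝔳 : ∀ z ∈ 𝔳, ∃ a b c : ℝ,
      z = a • ex41basis 0 + b • ex41basis 2 + c • ex41basis 4 := by
    intro z hz
    rw [show 𝔳 = Submodule.span ℝ
      (insert (ex41basis 0) {ex41basis 2, ex41basis 4}) from rfl,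
      Submodule.mem_span_insert] at hz
    obtain ⟨a, z', hz', rfl⟩ := hz
    rw [Submodule.mem_span_pair] at hz'
    obtain ⟨b, c, h⟩ := hz'
    exact ⟨a, b, c, by rw [← h, ← add_assoc]⟩
  have sqpos : (0:ℝ) < Real.sqrt 30 := Real.sqrt_pos.mpr (by norm_num)
  refine ⟨?_, ?_, ?_⟩
  · -- (a)
    intro u hu v hv
    have hgen2 : ∀ g ∈ ({ex41basis 0, ex41basis 2, ex41basis 4} :
        Set (EuclideanSpace ℝ (Fin 5))),
        ∀ g' ∈ ({ex41basis 0, ex41basis 2, ex41basis 4} :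
        Set (EuclideanSpace ℝ (Fin 5))), br g g' ∈ 𝔳 := by
      rintro g (rfl | rfl | rfl) g' (rfl | rfl | rfl) <;>
        simp only [halt, h02, h04, h20, h40, h24, h42] <;>
        first
          | exact Submodule.zero_mem _
          | exact Submodule.smul_mem _ _ (by assumption)
          | exact Submodule.neg_mem _ (Submodule.smul_mem _ _ (by assumption))
    have h1 : ∀ g' ∈ ({ex41basis 0, ex41basis 2, ex41basis 4} :
        Set (EuclideanSpace ℝ (Fin 5))), br u g' ∈ 𝔳 := by
      intro g' hg'
      have hle : 𝔳 ≤ Submodule.comap (br.flip g') 𝔳 :=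
        Submodule.span_le.mpr fun g hg => by
          simpa [Submodule.mem_comap] using hgen2 g hg g' hg'
      simpa using hle hu
    have hle : 𝔳 ≤ Submodule.comap (br u) 𝔳 :=
      Submodule.span_le.mpr fun g hg => by
        simpa [Submodule.mem_comap] using h1 g hg
    exact hle hv
  · -- (b)
    intro u hu v hv x hx
    obtain ⟨a, b, c, rfl⟩ := rep𝔳 u hu
    obtain ⟨a', b', c', rfl⟩ := rep𝔳 v hv
    obtain ⟨p, q, rfl⟩ := rep𝔥 x hx
    simp only [map_add, map_smul, LinearMap.add_apply, LinearMap.smul_apply,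
      h10, h12, h14, h30, h32, h34, inner_add_left, inner_add_right,
      real_inner_smul_left, real_inner_smul_right, inner_neg_left, inner_neg_right,
      smul_neg, ex41basis_ortho]
    norm_num [show (3:Fin 5) ≠ 0 by decide, show (1:Fin 5) ≠ 2 by decide,
      show (3:Fin 5) ≠ 2 by decide, show (1:Fin 5) ≠ 4 by decide,
      show (3:Fin 5) ≠ 4 by decide, show (1:Fin 5) ≠ 0 by decide]
  · -- (c)
    rintro ⟨ν, hν⟩
    have e1 := hν ⟨ex41basis 0, me0⟩ (ex41basis 1) me1 (ex41basis 1) me1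
    have e3 := hν ⟨ex41basis 0, me0⟩ (ex41basis 3) me3 (ex41basis 3) me3
    simp only [h01, h03, real_inner_smul_left, ex41basis_ortho] at e1 e3
    norm_num at e1 e3
    rw [div_eq_mul_inv] at e3
    have h6 : (2:ℝ) * (Real.sqrt 30)⁻¹ = 6 * (Real.sqrt 30)⁻¹ := by linarith
    have := mul_right_cancel₀ (inv_ne_zero sqpos.ne') h6
    norm_num at this
end

section
/- Let 𝔰 be the 5-dimensional metric Lie algebra with orthonormal basis {A, X₁, X₂, X₃, X₄} and brackets [X₁,X₂] = √(2/3)·X₃, [X₁,X₃] = √(2/3)·X₄, [A,Xⱼ] = (j/√30)·Xⱼ for j = 1,2,3,4, all other basis brackets zero. Set 𝔳 = span{X₂, X₃, X₄} and 𝔥 = span{A, X₁}. Then: (a) 𝔳 is a Lie subalgebra of 𝔰; (b) the conformal condition holds, i.e. there is a linear functional ν on 𝔳 (namely ν = 0) such that ⟨[V,X],Y⟩ + ⟨[V,Y],X⟩ = −2ν(V)⟨X,Y⟩ for all V ∈ 𝔳 and X, Y ∈ 𝔥; (c) the minimality condition fails: for the orthonormal basis {X₂, X₃, X₄} of 𝔳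 one has ⟨[A,X₂],X₂⟩ + ⟨[A,X₃],X₃⟩ + ⟨[A,X₄],X₄⟩ = 9/√30 ≠ 0, so in particular the fibers are neither minimal nor totally geodesic. -/
open RealInnerProductSpace

lemma ex41_inner (i j : Fin 5) :
    ⟪ex41basis i, ex41basis j⟫ = if j = i then (1:ℝ) else 0 := by
  simp [ex41basis, EuclideanSpace.inner_single_left, EuclideanSpace.single_apply]
  exact if_congr eq_comm rfl rfl

/-- In the 5-dimensional solvable Einstein Lie algebra `𝔰` with orthonormal basis
`{A, X₁, X₂, X₃, X₄}` and brackets `[X₁,X₂] = √(2/3) X₃`, `[X₁,X₃] = √(2/3) X₄`,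
`[A,Xⱼ] = (j/√30) Xⱼ`, all other basis brackets zero, the decomposition
`𝔳 = span{X₂, X₃, X₄}`, `𝔥 = span{A, X₁}` satisfies: (a) `𝔳` is a subalgebra,
(b) the conformal condition holds with `ν = 0`, (c) the minimality condition fails:
`⟨[A,X₂],X₂⟩ + ⟨[A,X₃],X₃⟩ + ⟨[A,X₄],X₄⟩ = 9/√30 ≠ 0`. -/
theorem ex41_conformal_notMinimal
    (br : EuclideanSpace ℝ (Fin 5) →ₗ[ℝ] EuclideanSpace ℝ (Fin 5) →ₗ[ℝ]
      EuclideanSpace ℝ (Fin 5))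
    (halt : ∀ x, br x x = 0)
    (hjac : ∀ x y z, br (br x y) z + br (br y z) x + br (br z x) y = 0)
    (h12 : br (ex41basis 1) (ex41basis 2) = Real.sqrt (2/3) • ex41basis 3)
    (h13 : br (ex41basis 1) (ex41basis 3) = Real.sqrt (2/3) • ex41basis 4)
    (h14 : br (ex41basis 1) (ex41basis 4) = 0)
    (h23 : br (ex41basis 2) (ex41basis 3) = 0)
    (h24 : br (ex41basis 2) (ex41basis 4) = 0)
    (h34 : br (ex41basis 3) (ex41basis 4) = 0)
    (hA : ∀ j : Fin 5, 1 ≤ (j : ℕ) →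
      br (ex41basis 0) (ex41basis j) = (((j : ℕ) : ℝ) / Real.sqrt 30) • ex41basis j) :
    let 𝔳 : Submodule ℝ (EuclideanSpace ℝ (Fin 5)) :=
      Submodule.span ℝ {ex41basis 2, ex41basis 3, ex41basis 4}
    let 𝔥 : Submodule ℝ (EuclideanSpace ℝ (Fin 5)) :=
      Submodule.span ℝ {ex41basis 0, ex41basis 1}
    -- (a) 𝔳 is a Lie subalgebra
    (∀ u ∈ 𝔳, ∀ v ∈ 𝔳, br u v ∈ 𝔳) ∧
    -- (b) conformal condition holds, with ν = 0
    (∃ ν : 𝔳 →ₗ[ℝ] ℝ, ν = 0 ∧ ∀ v : 𝔳, ∀ x ∈ 𝔥, ∀ y ∈ 𝔥,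
        ⟪br (v : EuclideanSpace ℝ (Fin 5)) x, y⟫ +
          ⟪br (v : EuclideanSpace ℝ (Fin 5)) y, x⟫ = -2 * ν v * ⟪x, y⟫) ∧
    -- (c) minimality fails
    (⟪br (ex41basis 0) (ex41basis 2), ex41basis 2⟫ +
      ⟪br (ex41basis 0) (ex41basis 3), ex41basis 3⟫ +
      ⟪br (ex41basis 0) (ex41basis 4), ex41basis 4⟫ = 9 / Real.sqrt 30 ∧
      (9 / Real.sqrt 30 : ℝ) ≠ 0) := by
  intro 𝔳 𝔥
  have skew : ∀ x y, br x y = - br y x := by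
    intro x y
    have h := halt (x + y)
    simp only [map_add, LinearMap.add_apply, halt x, halt y, zero_add, add_zero] at h
    exact eq_neg_of_add_eq_zero_right h
  have hA2 : br (ex41basis 0) (ex41basis 2) = (2 / Real.sqrt 30) • ex41basis 2 := by
    have := hA 2 (by decide); norm_num at this ⊢; exact this
  have hA3 : br (ex41basis 0) (ex41basis 3) = (3 / Real.sqrt 30) • ex41basis 3 := by
    have := hA 3 (by decide); norm_num at this ⊢; exact this
  have hA4 : br (ex41basis 0) (ex41basis 4) = (4 / Real.sqrt 30) • ex41basis 4 := by
    have := hA 4 (by decide); norm_num at this ⊢; exact this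
  -- generators of 𝔳 and 𝔥
  have mem2 : ex41basis 2 ∈ 𝔳 := Submodule.subset_span (by simp)
  have mem3 : ex41basis 3 ∈ 𝔳 := Submodule.subset_span (by simp)
  have mem4 : ex41basis 4 ∈ 𝔳 := Submodule.subset_span (by simp)
  -- brackets among generators of 𝔳 vanish
  have gen0 : ∀ a ∈ ({ex41basis 2, ex41basis 3, ex41basis 4} :
      Set (EuclideanSpace ℝ (Fin 5))), ∀ b ∈ ({ex41basis 2, ex41basis 3, ex41basis 4} :
      Set (EuclideanSpace ℝ (Fin 5))), br a b = 0 := by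
    rintro a (rfl | rfl | rfl) b (rfl | rfl | rfl) <;>
      simp [halt, h23, h24, h34, skew (ex41basis 3) (ex41basis 2),
        skew (ex41basis 4) (ex41basis 2), skew (ex41basis 4) (ex41basis 3)]
  have bra0 : ∀ u ∈ 𝔳, ∀ v ∈ 𝔳, br u v = 0 := by
    intro u hu
    induction hu using Submodule.span_induction with
    | mem a ha =>
      intro v hv
      induction hv using Submodule.span_induction with
      | mem b hb => exact gen0 a ha b hb
      | zero => simp
      | add x y _ _ hx hy => simp [hx, hy]
      | smul c x _ hx => simp [hx]
    | zero => intro v hv; simp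
    | add x y _ _ hx hy => intro v hv; simp [hx v hv, hy v hv]
    | smul c x _ hx => intro v hv; simp [hx v hv]
  -- brackets of 𝔳 with 𝔥 stay in 𝔳
  have brvh : ∀ v ∈ 𝔳, ∀ x ∈ 𝔥, br v x ∈ 𝔳 := by
    have gen : ∀ a ∈ ({ex41basis 2, ex41basis 3, ex41basis 4} :
        Set (EuclideanSpace ℝ (Fin 5))), ∀ b ∈ ({ex41basis 0, ex41basis 1} :
        Set (EuclideanSpace ℝ (Fin 5))), br a b ∈ 𝔳 := by
      rintro a (rfl | rfl | rfl) b (rfl | rfl)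
      · rw [skew, hA2]; exact 𝔳.neg_mem (𝔳.smul_mem _ mem2)
      · rw [skew, h12]; exact 𝔳.neg_mem (𝔳.smul_mem _ mem3)
      · rw [skew, hA3]; exact 𝔳.neg_mem (𝔳.smul_mem _ mem3)
      · rw [skew, h13]; exact 𝔳.neg_mem (𝔳.smul_mem _ mem4)
      · rw [skew, hA4]; exact 𝔳.neg_mem (𝔳.smul_mem _ mem4)
      · rw [skew, h14]; simp
    intro v hv
    induction hv using Submodule.span_induction with
    | mem a ha =>
      intro x hx
      induction hx using Submodule.span_induction with
      | mem b hb => exact gen a ha b hb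
      | zero => simp
      | add x y _ _ hx hy => rw [map_add]; exact 𝔳.add_mem hx hy
      | smul c x _ hx => rw [map_smul]; exact 𝔳.smul_mem c hx
    | zero => intro x hx; simp
    | add x y _ _ hx hy => intro z hz; rw [map_add, LinearMap.add_apply]
                           exact 𝔳.add_mem (hx z hz) (hy z hz)
    | smul c x _ hx => intro z hz; rw [map_smul, LinearMap.smul_apply]
                       exact 𝔳.smul_mem c (hx z hz)
  -- orthogonality of 𝔳 and 𝔥
  have orth : ∀ w ∈ 𝔳, ∀ y ∈ 𝔥, ⟪w, y⟫ = 0 := by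
    have gen : ∀ a ∈ ({ex41basis 2, ex41basis 3, ex41basis 4} :
        Set (EuclideanSpace ℝ (Fin 5))), ∀ b ∈ ({ex41basis 0, ex41basis 1} :
        Set (EuclideanSpace ℝ (Fin 5))), ⟪a, b⟫ = (0:ℝ) := by
      rintro a (rfl | rfl | rfl) b (rfl | rfl) <;> rw [ex41_inner] <;> norm_num <;> decide
    intro w hw
    induction hw using Submodule.span_induction with
    | mem a ha =>
      intro y hy
      induction hy using Submodule.span_induction with
      | mem b hb => exact gen a ha b hb
      | zero => simp
      | add x y _ _ hx hy => rw [inner_add_right, hx, hy]; ring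
      | smul c x _ hx => rw [real_inner_smul_right, hx]; ring
    | zero => intro y hy; simp
    | add x y _ _ hx hy => intro z hz; rw [inner_add_left, hx z hz, hy z hz]; ring
    | smul c x _ hx => intro z hz; rw [real_inner_smul_left, hx z hz]; ring
  refine ⟨fun u hu v hv => by rw [bra0 u hu v hv]; exact 𝔳.zero_mem, ?_, ?_⟩
  · refine ⟨0, rfl, ?_⟩
    intro v x hx y hy
    rw [orth _ (brvh v v.2 x hx) y hy, orth _ (brvh v v.2 y hy) x hx]
    simp
  · have h30 : Real.sqrt 30 ≠ 0 := by positivity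
    constructor
    · rw [hA2, hA3, hA4, real_inner_smul_left, real_inner_smul_left,
        real_inner_smul_left, ex41_inner, ex41_inner, ex41_inner]
      norm_num
      field_simp
      ring
    · positivity
end

section
/- Let 𝔰 be the 5-dimensional metric Lie algebra with orthonormal basis {A, X₁, X₂, X₃, X₄} and brackets [X₁,X₂] = √(2/3)·X₃, [A,X₁] = (2/√33)·X₁, [A,X₂] = (2/√33)·X₂, [A,X₃] = (4/√33)·X₃, [A,X₄] = (3/√33)·X₄, all other basis brackets zero. Set 𝔳 = span{A, X₃, X₄} and 𝔥 = span{X₁, X₂}. Then: (a) 𝔳 is a Lie subalgebra of 𝔰; (b) the totally geodesic condition holds, i.e. ⟨[X,U],V⟩ + ⟨[X,V],U⟩ = 0 for all U, V ∈ 𝔳 and X ∈ 𝔥; (c) the conformal condition holds, i.e. there is a linear functional ν on 𝔳 such that ⟨[V,X],Y⟩ + ⟨[V,Y],X⟩ = −2ν(V)⟨X,Y⟩ for all V ∈ 𝔳 and X, Y ∈ 𝔥. -/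
open RealInnerProductSpace

/-- The standard orthonormal basis `{A, X₁, X₂, X₃, X₄}` of the 5-dimensional
solvable Einstein Lie algebra of Example 4.2: `e 0 = A`, `e j = Xⱼ` for `j = 1,…,4`. -/
noncomputable def ex42basis : Fin 5 → EuclideanSpace ℝ (Fin 5) :=
  fun i => EuclideanSpace.single i 1

/-- In the 5-dimensional solvable Einstein Lie algebra `𝔰` with orthonormal basis
`{A, X₁, X₂, X₃, X₄}` and brackets `[X₁,X₂] = √(2/3) X₃`, `[A,X₁] = (2/√33) X₁`,
`[A,X₂] = (2/√33) X₂`, `[A,X₃] = (4/√33) X₃`, `[A,X₄] = (3/√33) X₄`, all other basis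
brackets zero, the decomposition `𝔳 = span{A, X₃, X₄}`, `𝔥 = span{X₁, X₂}` satisfies:
(a) `𝔳` is a subalgebra, (b) the totally geodesic condition holds,
(c) the conformal condition holds. -/
theorem ex42_totGeod_conformal
    (br : EuclideanSpace ℝ (Fin 5) →ₗ[ℝ] EuclideanSpace ℝ (Fin 5) →ₗ[ℝ]
      EuclideanSpace ℝ (Fin 5))
    (halt : ∀ x, br x x = 0)
    (hjac : ∀ x y z, br (br x y) z + br (br y z) x + br (br z x) y = 0)
    (h12 : br (ex42basis 1) (ex42basis 2) = Real.sqrt (2/3) • ex42basis 3)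
    (h13 : br (ex42basis 1) (ex42basis 3) = 0)
    (h14 : br (ex42basis 1) (ex42basis 4) = 0)
    (h23 : br (ex42basis 2) (ex42basis 3) = 0)
    (h24 : br (ex42basis 2) (ex42basis 4) = 0)
    (h34 : br (ex42basis 3) (ex42basis 4) = 0)
    (hA1 : br (ex42basis 0) (ex42basis 1) = (2 / Real.sqrt 33) • ex42basis 1)
    (hA2 : br (ex42basis 0) (ex42basis 2) = (2 / Real.sqrt 33) • ex42basis 2)
    (hA3 : br (ex42basis 0) (ex42basis 3) = (4 / Real.sqrt 33) • ex42basis 3)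
    (hA4 : br (ex42basis 0) (ex42basis 4) = (3 / Real.sqrt 33) • ex42basis 4) :
    let 𝔳 : Submodule ℝ (EuclideanSpace ℝ (Fin 5)) :=
      Submodule.span ℝ {ex42basis 0, ex42basis 3, ex42basis 4}
    let 𝔥 : Submodule ℝ (EuclideanSpace ℝ (Fin 5)) :=
      Submodule.span ℝ {ex42basis 1, ex42basis 2}
    -- (a) 𝔳 is a Lie subalgebra
    (∀ u ∈ 𝔳, ∀ v ∈ 𝔳, br u v ∈ 𝔳) ∧
    -- (b) totally geodesic condition
    (∀ u ∈ 𝔳, ∀ v ∈ 𝔳, ∀ x ∈ 𝔥, ⟪br x u, v⟫ + ⟪br x v, u⟫ = 0) ∧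
    -- (c) conformal condition
    (∃ ν : 𝔳 →ₗ[ℝ] ℝ, ∀ v : 𝔳, ∀ x ∈ 𝔥, ∀ y ∈ 𝔥,
        ⟪br (v : EuclideanSpace ℝ (Fin 5)) x, y⟫ +
          ⟪br (v : EuclideanSpace ℝ (Fin 5)) y, x⟫ = -2 * ν v * ⟪x, y⟫) := by
  intro 𝔳 𝔥
  have hanti : ∀ x y, br x y = - br y x := by
    intro x y
    have h := halt (x + y)
    simp only [map_add, LinearMap.add_apply, halt, zero_add, add_zero] at h
    linear_combination (norm := module) h
  have h30 : br (ex42basis 3) (ex42basis 0) = (-(4 / Real.sqrt 33)) • ex42basis 3 := by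
    rw [hanti, hA3, neg_smul]
  have h40 : br (ex42basis 4) (ex42basis 0) = (-(3 / Real.sqrt 33)) • ex42basis 4 := by
    rw [hanti, hA4, neg_smul]
  have h43 : br (ex42basis 4) (ex42basis 3) = 0 := by rw [hanti, h34, neg_zero]
  have h31 : br (ex42basis 3) (ex42basis 1) = 0 := by rw [hanti, h13, neg_zero]
  have h32 : br (ex42basis 3) (ex42basis 2) = 0 := by rw [hanti, h23, neg_zero]
  have h41 : br (ex42basis 4) (ex42basis 1) = 0 := by rw [hanti, h14, neg_zero]
  have h42 : br (ex42basis 4) (ex42basis 2) = 0 := by rw [hanti, h24, neg_zero]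
  have h10 : br (ex42basis 1) (ex42basis 0) = (-(2 / Real.sqrt 33)) • ex42basis 1 := by
    rw [hanti, hA1, neg_smul]
  have h20 : br (ex42basis 2) (ex42basis 0) = (-(2 / Real.sqrt 33)) • ex42basis 2 := by
    rw [hanti, hA2, neg_smul]
  have hmemv : ∀ v ∈ 𝔳, ∃ a b c : ℝ,
      v = a • ex42basis 0 + b • ex42basis 3 + c • ex42basis 4 := by
    intro v hv
    rw [Submodule.mem_span_insert] at hv
    obtain ⟨a, z, hz, rfl⟩ := hv
    rw [Submodule.mem_span_pair] at hz
    obtain ⟨b, c, rfl⟩ := hz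
    exact ⟨a, b, c, by module⟩
  have hmemh : ∀ x ∈ 𝔥, ∃ p q : ℝ, x = p • ex42basis 1 + q • ex42basis 2 := by
    intro x hx
    rw [Submodule.mem_span_pair] at hx
    obtain ⟨p, q, rfl⟩ := hx
    exact ⟨p, q, rfl⟩
  have he3 : ex42basis 3 ∈ 𝔳 := Submodule.subset_span (by simp)
  have he4 : ex42basis 4 ∈ 𝔳 := Submodule.subset_span (by simp)
  have hinner : ∀ i j : Fin 5, ⟪ex42basis i, ex42basis j⟫ = if i = j then 1 else 0 := by
    intro i j
    simp [ex42basis, EuclideanSpace.inner_single_left, EuclideanSpace.single_apply,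
      eq_comm]
  refine ⟨?_, ?_, ?_⟩
  · -- (a)
    intro u hu v hv
    obtain ⟨a, b, c, rfl⟩ := hmemv u hu
    obtain ⟨a', b', c', rfl⟩ := hmemv v hv
    have hcalc : br (a • ex42basis 0 + b • ex42basis 3 + c • ex42basis 4)
        (a' • ex42basis 0 + b' • ex42basis 3 + c' • ex42basis 4)
        = (a * (4 / Real.sqrt 33) * b' - b * (4 / Real.sqrt 33) * a') • ex42basis 3
          + (a * (3 / Real.sqrt 33) * c' - c * (3 / Real.sqrt 33) * a') • ex42basis 4 := by
      simp only [map_add, map_smul, LinearMap.add_apply, LinearMap.smul_apply,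
        halt, hA3, hA4, h34, h30, h40, h43]
      module
    rw [hcalc]
    exact Submodule.add_mem _ (Submodule.smul_mem _ _ he3) (Submodule.smul_mem _ _ he4)
  · -- (b)
    intro u hu v hv x hx
    obtain ⟨a, b, c, rfl⟩ := hmemv u hu
    obtain ⟨a', b', c', rfl⟩ := hmemv v hv
    obtain ⟨p, q, rfl⟩ := hmemh x hx
    simp only [Fin.reduceEq, reduceIte, map_add, map_smul, LinearMap.add_apply,
      LinearMap.smul_apply, h10, h20, h13, h14, h23, h24, inner_add_left, inner_add_right,
      real_inner_smul_left, real_inner_smul_right, inner_zero_left, hinner,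
      smul_zero, smul_eq_mul]
    ring
  · -- (c)
    refine ⟨{ toFun := fun w => -(2 / Real.sqrt 33) * ⟪ex42basis 0, (w : EuclideanSpace ℝ (Fin 5))⟫
              map_add' := by
                intro w₁ w₂
                simp only [Submodule.coe_add, inner_add_right]
                ring
              map_smul' := by
                intro r w
                simp only [Submodule.coe_smul, real_inner_smul_right,
                  RingHom.id_apply, smul_eq_mul]
                ring }, ?_⟩
    rintro ⟨v, hv⟩ x hx y hy
    obtain ⟨a, b, c, hvv⟩ := hmemv v hv
    obtain ⟨p, q, rfl⟩ := hmemh x hx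
    obtain ⟨p', q', rfl⟩ := hmemh y hy
    simp only [Fin.reduceEq, reduceIte, LinearMap.coe_mk, AddHom.coe_mk, hvv,
      map_add, map_smul, LinearMap.add_apply, LinearMap.smul_apply,
      hA1, hA2, h31, h32, h41, h42, inner_add_left, inner_add_right,
      real_inner_smul_left, real_inner_smul_right, inner_zero_left, hinner,
      smul_zero, smul_eq_mul]
    ring
end

section
/- Let M be the symmetric 10×10 real matrix M = (1/30)·N, where N has rows (13, −2√5, −4√5, 0, 0, 0, 0, 0, 0, 0), (−2√5, 4, 0, 0, 0, 0, 0, 0, 0, 0), (−4√5, 0, 16, 0, 0, 0, 0, 0, 0, 0), (0, 0, 0, 8, 0, 0, 0, 0, 0, 0), (0, 0, 0, 0, 1, 0, 0, √5, 0, √5), (0, 0, 0, 0, 0, 9, −3√5, 0, −3√5, 0), (0, 0, 0, 0, 0, −3√5, 17, 0, 5, 0), (0, 0, 0, 0, √5, 0, 0, 1, 0, 5), (0, 0, 0, 0, 0, −3√5, 5, 0, −1, 0), (0, 0, 0, 0, √5, 0, 0, 5, 0, 7). Let f ∈ ℝ[X] be the characteristic polynomial of M and f′ its derivative. Then gcd(f,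 f′) is a nonzero constant multiple of X − 4/15; in particular gcd(f, f′) has degree 1 < 3. -/
open Polynomial

/-- The curvature operator of the 5-dimensional homogeneous Einstein solvmanifold of
Example 4.1, as a symmetric 10×10 real matrix `(1/30) • N`. -/
noncomputable def curvEx41 : Matrix (Fin 10) (Fin 10) ℝ :=
  (30 : ℝ)⁻¹ •
  !![13, -2*Real.sqrt 5, -4*Real.sqrt 5, 0, 0, 0, 0, 0, 0, 0;
     -2*Real.sqrt 5, 4, 0, 0, 0, 0, 0, 0, 0, 0;
     -4*Real.sqrt 5, 0, 16, 0, 0, 0, 0, 0, 0, 0;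
     0, 0, 0, 8, 0, 0, 0, 0, 0, 0;
     0, 0, 0, 0, 1, 0, 0, Real.sqrt 5, 0, Real.sqrt 5;
     0, 0, 0, 0, 0, 9, -3*Real.sqrt 5, 0, -3*Real.sqrt 5, 0;
     0, 0, 0, 0, 0, -3*Real.sqrt 5, 17, 0, 5, 0;
     0, 0, 0, 0, Real.sqrt 5, 0, 0, 1, 0, 5;
     0, 0, 0, 0, 0, -3*Real.sqrt 5, 5, 0, -1, 0;
     0, 0, 0, 0, Real.sqrt 5, 0, 0, 5, 0, 7]

namespace CurvEx41Aux

noncomputable def cA1 : Matrix (Fin 3) (Fin 3) ℝ :=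
  (30 : ℝ)⁻¹ • !![13, -2*Real.sqrt 5, -4*Real.sqrt 5;
                  -2*Real.sqrt 5, 4, 0;
                  -4*Real.sqrt 5, 0, 16]
noncomputable def cA2 : Matrix (Fin 1) (Fin 1) ℝ := (30 : ℝ)⁻¹ • !![8]
noncomputable def cA3 : Matrix (Fin 3) (Fin 3) ℝ :=
  (30 : ℝ)⁻¹ • !![1, Real.sqrt 5, Real.sqrt 5;
                  Real.sqrt 5, 1, 5;
                  Real.sqrt 5, 5, 7]
noncomputable def cA4 : Matrix (Fin 3) (Fin 3) ℝ :=
  (30 : ℝ)⁻¹ • !![9, -3*Real.sqrt 5, -3*Real.sqrt 5;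
                  -3*Real.sqrt 5, 17, 5;
                  -3*Real.sqrt 5, 5, -1]

noncomputable def blockM :
    Matrix ((Fin 3 ⊕ Fin 1) ⊕ (Fin 3 ⊕ Fin 3)) ((Fin 3 ⊕ Fin 1) ⊕ (Fin 3 ⊕ Fin 3)) ℝ :=
  Matrix.fromBlocks (Matrix.fromBlocks cA1 0 0 cA2) 0 0 (Matrix.fromBlocks cA3 0 0 cA4)

def idxEquiv : ((Fin 3 ⊕ Fin 1) ⊕ (Fin 3 ⊕ Fin 3)) ≃ Fin 10 where
  toFun := Sum.elim (Sum.elim ![0,1,2] ![3]) (Sum.elim ![4,7,9] ![5,6,8])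
  invFun := ![Sum.inl (Sum.inl 0), Sum.inl (Sum.inl 1), Sum.inl (Sum.inl 2),
              Sum.inl (Sum.inr 0), Sum.inr (Sum.inl 0), Sum.inr (Sum.inr 0),
              Sum.inr (Sum.inr 1), Sum.inr (Sum.inl 1), Sum.inr (Sum.inr 2),
              Sum.inr (Sum.inl 2)]
  left_inv := by decide
  right_inv := by decide

variable {α : Type*}

@[local simp] lemma stepv_3_2 (x : α) (u : Fin 2 → α) : Matrix.vecCons x u (2 : Fin 3) = u (1 : Fin 2) := rfl
@[local simp] lemma stepv_4_2 (x : α) (u : Fin 3 → α) : Matrix.vecCons x u (2 : Fin 4) = u (1 : Fin 3) := rfl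
@[local simp] lemma stepv_4_3 (x : α) (u : Fin 3 → α) : Matrix.vecCons x u (3 : Fin 4) = u (2 : Fin 3) := rfl
@[local simp] lemma stepv_5_2 (x : α) (u : Fin 4 → α) : Matrix.vecCons x u (2 : Fin 5) = u (1 : Fin 4) := rfl
@[local simp] lemma stepv_5_3 (x : α) (u : Fin 4 → α) : Matrix.vecCons x u (3 : Fin 5) = u (2 : Fin 4) := rfl
@[local simp] lemma stepv_5_4 (x : α) (u : Fin 4 → α) : Matrix.vecCons x u (4 : Fin 5) = u (3 : Fin 4) := rfl
@[local simp] lemma stepv_6_2 (x : α) (u : Fin 5 → α) : Matrix.vecCons x u (2 : Fin 6) = u (1 : Fin 5) := rfl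
@[local simp] lemma stepv_6_3 (x : α) (u : Fin 5 → α) : Matrix.vecCons x u (3 : Fin 6) = u (2 : Fin 5) := rfl
@[local simp] lemma stepv_6_4 (x : α) (u : Fin 5 → α) : Matrix.vecCons x u (4 : Fin 6) = u (3 : Fin 5) := rfl
@[local simp] lemma stepv_6_5 (x : α) (u : Fin 5 → α) : Matrix.vecCons x u (5 : Fin 6) = u (4 : Fin 5) := rfl
@[local simp] lemma stepv_7_2 (x : α) (u : Fin 6 → α) : Matrix.vecCons x u (2 : Fin 7) = u (1 : Fin 6) := rfl
@[local simp] lemma stepv_7_3 (x : α) (u : Fin 6 → α) : Matrix.vecCons x u (3 : Fin 7) = u (2 : Fin 6) := rfl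
@[local simp] lemma stepv_7_4 (x : α) (u : Fin 6 → α) : Matrix.vecCons x u (4 : Fin 7) = u (3 : Fin 6) := rfl
@[local simp] lemma stepv_7_5 (x : α) (u : Fin 6 → α) : Matrix.vecCons x u (5 : Fin 7) = u (4 : Fin 6) := rfl
@[local simp] lemma stepv_7_6 (x : α) (u : Fin 6 → α) : Matrix.vecCons x u (6 : Fin 7) = u (5 : Fin 6) := rfl
@[local simp] lemma stepv_8_2 (x : α) (u : Fin 7 → α) : Matrix.vecCons x u (2 : Fin 8) = u (1 : Fin 7) := rfl
@[local simp] lemma stepv_8_3 (x : α) (u : Fin 7 → α) : Matrix.vecCons x u (3 : Fin 8) = u (2 : Fin 7) := rfl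
@[local simp] lemma stepv_8_4 (x : α) (u : Fin 7 → α) : Matrix.vecCons x u (4 : Fin 8) = u (3 : Fin 7) := rfl
@[local simp] lemma stepv_8_5 (x : α) (u : Fin 7 → α) : Matrix.vecCons x u (5 : Fin 8) = u (4 : Fin 7) := rfl
@[local simp] lemma stepv_8_6 (x : α) (u : Fin 7 → α) : Matrix.vecCons x u (6 : Fin 8) = u (5 : Fin 7) := rfl
@[local simp] lemma stepv_8_7 (x : α) (u : Fin 7 → α) : Matrix.vecCons x u (7 : Fin 8) = u (6 : Fin 7) := rfl
@[local simp] lemma stepv_9_2 (x : α) (u : Fin 8 → α) : Matrix.vecCons x u (2 : Fin 9) = u (1 : Fin 8) := rfl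
@[local simp] lemma stepv_9_3 (x : α) (u : Fin 8 → α) : Matrix.vecCons x u (3 : Fin 9) = u (2 : Fin 8) := rfl
@[local simp] lemma stepv_9_4 (x : α) (u : Fin 8 → α) : Matrix.vecCons x u (4 : Fin 9) = u (3 : Fin 8) := rfl
@[local simp] lemma stepv_9_5 (x : α) (u : Fin 8 → α) : Matrix.vecCons x u (5 : Fin 9) = u (4 : Fin 8) := rfl
@[local simp] lemma stepv_9_6 (x : α) (u : Fin 8 → α) : Matrix.vecCons x u (6 : Fin 9) = u (5 : Fin 8) := rfl
@[local simp] lemma stepv_9_7 (x : α) (u : Fin 8 → α) : Matrix.vecCons x u (7 : Fin 9) = u (6 : Fin 8) := rfl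
@[local simp] lemma stepv_9_8 (x : α) (u : Fin 8 → α) : Matrix.vecCons x u (8 : Fin 9) = u (7 : Fin 8) := rfl
@[local simp] lemma stepv_10_2 (x : α) (u : Fin 9 → α) : Matrix.vecCons x u (2 : Fin 10) = u (1 : Fin 9) := rfl
@[local simp] lemma stepv_10_3 (x : α) (u : Fin 9 → α) : Matrix.vecCons x u (3 : Fin 10) = u (2 : Fin 9) := rfl
@[local simp] lemma stepv_10_4 (x : α) (u : Fin 9 → α) : Matrix.vecCons x u (4 : Fin 10) = u (3 : Fin 9) := rfl
@[local simp] lemma stepv_10_5 (x : α) (u : Fin 9 → α) : Matrix.vecCons x u (5 : Fin 10) = u (4 : Fin 9) := rfl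
@[local simp] lemma stepv_10_6 (x : α) (u : Fin 9 → α) : Matrix.vecCons x u (6 : Fin 10) = u (5 : Fin 9) := rfl
@[local simp] lemma stepv_10_7 (x : α) (u : Fin 9 → α) : Matrix.vecCons x u (7 : Fin 10) = u (6 : Fin 9) := rfl
@[local simp] lemma stepv_10_8 (x : α) (u : Fin 9 → α) : Matrix.vecCons x u (8 : Fin 10) = u (7 : Fin 9) := rfl
@[local simp] lemma stepv_10_9 (x : α) (u : Fin 9 → α) : Matrix.vecCons x u (9 : Fin 10) = u (8 : Fin 9) := rfl

set_option maxHeartbeats 4000000 in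
lemma key : curvEx41 = Matrix.reindex idxEquiv idxEquiv blockM := by
  ext i j
  fin_cases i <;> fin_cases j <;>
    simp [curvEx41, blockM, idxEquiv, cA1, cA2, cA3, cA4, Matrix.vecHead, Matrix.vecTail]

lemma cpA1 : cA1.charpoly = X^3 - C (11/10) * X^2 + C (56/225) * X - C (8/1125) := by
  have h5 : Real.sqrt 5 * Real.sqrt 5 = 5 := Real.mul_self_sqrt (by norm_num)
  rw [Matrix.charpoly, Matrix.det_fin_three]
  refine Polynomial.funext fun x => ?_
  simp [Matrix.charmatrix_apply, cA1, Matrix.diagonal]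
  linear_combination (-(x/45) + 16/3375) * h5

lemma cpA2 : cA2.charpoly = X - C (4/15) := by
  rw [Matrix.charpoly, Matrix.det_fin_one, Matrix.charmatrix_apply_eq]
  norm_num [cA2]

lemma cpA3 : cA3.charpoly = X^3 - C (3/10) * X^2 - C (1/45) * X + C (1/3375) := by
  have h5 : Real.sqrt 5 * Real.sqrt 5 = 5 := Real.mul_self_sqrt (by norm_num)
  rw [Matrix.charpoly, Matrix.det_fin_three]
  refine Polynomial.funext fun x => ?_
  simp [Matrix.charmatrix_apply, cA3, Matrix.diagonal, Matrix.vecHead, Matrix.vecTail]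
  linear_combination (-(x/450) - 1/13500) * h5

lemma cpA4 : cA4.charpoly = X^3 - C (5/6) * X^2 + C (1/75) * X + C (3/125) := by
  have h5 : Real.sqrt 5 * Real.sqrt 5 = 5 := Real.mul_self_sqrt (by norm_num)
  rw [Matrix.charpoly, Matrix.det_fin_three]
  refine Polynomial.funext fun x => ?_
  simp [Matrix.charmatrix_apply, cA4, Matrix.diagonal, Matrix.vecHead, Matrix.vecTail]
  linear_combination (-(x/50) + 1/500) * h5

lemma charpoly_prod :
    curvEx41.charpoly = (cA1.charpoly * cA2.charpoly) * (cA3.charpoly * cA4.charpoly) := by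
  rw [key, Matrix.charpoly_reindex, blockM, Matrix.charpoly_fromBlocks_zero₁₂,
    Matrix.charpoly_fromBlocks_zero₁₂, Matrix.charpoly_fromBlocks_zero₁₂]

noncomputable def Gpoly : ℝ[X] := C (1) * X^8 + C (-59/30) * X^7 + C (1091/900) * X^6 + C (-577/3000) * X^5 + C (-568/16875) * X^4 + C (5284/759375) * X^3 + C (34/140625) * X^2 + C (-761/37968750) * X + C (2/10546875)

noncomputable def Gder : ℝ[X] := C (8) * X^7 + C (-413/30) * X^6 + C (1091/150) * X^5 + C (-577/600) * X^4 + C (-2272/16875) * X^3 + C (5284/253125) * X^2 + C (68/140625) * X + C (-761/37968750)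

noncomputable def upoly : ℝ[X] := C (1165432145759625913249343836549477578277587890625/101432521093023560016730089102220544) * X^7 + C (-8923756886490830338383887401284334492584228515625/405730084372094240066920356408882176) * X^6 + C (32846828130882380387934178714205097923583984375/2358895839372640930621629979121408) * X^5 + C (-4803173990924779648215246228870378346288330078125/1622920337488376960267681425635528704) * X^4 + C (-13112275690999349673487884129150246219873046875/202865042186047120033460178204441088) * X^3 + C (6885061689133825353041940054915509583369140625/101432521093023560016730089102220544) * X^2 + C (-2910929219310199102315958854682232662109375/1179447919686320465310814989560704) * X + C (-89040717940352865346480335147576575806640625/405730084372094240066920356408882176)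

noncomputable def vpoly : ℝ[X] := C (-233086429151925182649868767309895515655517578125/202865042186047120033460178204441088) * X^9 + C (1133231665439405722576586466348658815435791015625/405730084372094240066920356408882176) * X^8 + C (-2024651827968324482173097317477606659964599609375/811460168744188480133840712817764352) * X^7 + C (1575970804089195171640576120254463022520263671875/1622920337488376960267681425635528704) * X^6 + C (-1044732382246102340812882780806630316259765625/8280205803512127348304497069569024) * X^5 + C (-1727069889856171935962096394480588556845703125/101432521093023560016730089102220544) * X^4 + C (78095404528393648110183782195809263169921875/14490360156146222859532869871745792) * X^3 + C (-1318662835001950325647466136690834612890625/7655284610794230944658874649224192) * X^2 + C (-378586731061401352201315537963990608515625/12679065136627945002091261137777568) * X + C (17540427068576577904986238653554146453125/25358130273255890004182522275555136)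

lemma hGder : derivative Gpoly = Gder := by
  rw [Gpoly]
  simp only [derivative_add, derivative_sub, derivative_C_mul, derivative_X_pow,
    derivative_X, derivative_C, derivative_mul]
  rw [Gder]
  refine Polynomial.funext fun x => ?_
  simp
  ring

lemma hf : curvEx41.charpoly = (X - C (4/15))^2 * Gpoly := by
  rw [charpoly_prod, cpA1, cpA2, cpA3, cpA4, Gpoly]
  refine Polynomial.funext fun x => ?_
  simp
  ring

set_option maxHeartbeats 1000000 in
lemma hbez :
    upoly * ((X - C (4/15))^2 * Gpoly) +
      vpoly * (C 2 * Gpoly + (X - C (4/15)) * Gder) = 1 := by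
  rw [Gpoly, Gder, upoly, vpoly]
  refine Polynomial.funext fun x => ?_
  simp
  ring

end CurvEx41Aux

open CurvEx41Aux in
/-- For the curvature operator `M` of Example 4.1 with characteristic polynomial `f`,
the gcd of `f` and `f'` in `ℝ[X]` is a nonzero constant multiple of `X - 4/15`;
in particular it has degree `1 < 3`. -/
theorem gcd_charpoly_curvEx41 :
    (∃ c : ℝ, c ≠ 0 ∧
      EuclideanDomain.gcd curvEx41.charpoly (derivative curvEx41.charpoly) =
        C c * (X - C (4/15))) ∧
    (EuclideanDomain.gcd curvEx41.charpoly (derivative curvEx41.charpoly)).natDegree = 1 ∧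
    (1 : ℕ) < 3 := by
  set f := curvEx41.charpoly with hfdef
  set H : ℝ[X] := C 2 * Gpoly + (X - C (4/15)) * Gder with hH
  have hf' : derivative f = (X - C (4/15)) * H := by
    rw [hfdef, hf, derivative_mul, derivative_pow, derivative_X_sub_C, hGder, hH]
    ring
  set d := EuclideanDomain.gcd f (derivative f) with hd
  have hdl : d ∣ f := EuclideanDomain.gcd_dvd_left f (derivative f)
  have hdr : d ∣ derivative f := EuclideanDomain.gcd_dvd_right f (derivative f)
  have hcop : IsCoprime f H := ⟨upoly, vpoly, by rw [hfdef, hf]; exact hbez⟩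
  have hdH : IsCoprime d H := hcop.of_isCoprime_of_dvd_left hdl
  have hd2 : d ∣ (X - C (4/15)) := hdH.dvd_of_dvd_mul_right (hf' ▸ hdr)
  have hff : f = (X - C (4/15))^2 * Gpoly := hf
  have hd1 : (X - C (4/15)) ∣ d := by
    refine EuclideanDomain.dvd_gcd ⟨(X - C (4/15)) * Gpoly, ?_⟩ ⟨H, hf'⟩
    rw [hff]; ring
  have hassoc : Associated (X - C (4/15)) d := associated_of_dvd_dvd hd1 hd2
  obtain ⟨u, hu⟩ := hassoc
  obtain ⟨c, hcu, hcC⟩ := Polynomial.isUnit_iff.mp u.isUnit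
  have hc0 : c ≠ 0 := hcu.ne_zero
  have hdeq : d = C c * (X - C (4/15)) := by
    rw [← hu, hcC]; ring
  refine ⟨⟨c, hc0, hdeq⟩, ?_, by norm_num⟩
  rw [hdeq, Polynomial.natDegree_C_mul hc0, Polynomial.natDegree_X_sub_C]
end

section
/- Let n ≥ 2 and let 𝔤₁ be the (n+2)-dimensional metric Lie algebra with orthonormal basis {W, X₁, …, X_{n+1}} and brackets [W,X_k] = X_{k+1} for k = 1, …, n, all other basis brackets zero. Set 𝔳 = span{X₂, …, X_{n+1}} and 𝔥 = span{W, X₁}. Then: (a) 𝔳 is a Lie subalgebra of 𝔤₁ of codimension 2; (b) the conformal condition holds with ν = 0, i.e. ⟨[V,X],Y⟩ + ⟨[V,Y],X⟩ = 0 for all V ∈ 𝔳 and X, Y ∈ 𝔥; (c) the totally geodesic condition fails: ⟨[W,X₂],X₃⟩ + ⟨[W,X₃],X₂⟩ = 1 ≠ 0. -/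
open RealInnerProductSpace

/-- Example 6.1 of Gudmundsson–Svensson: in the `(n+2)`-dimensional metric Lie algebra
`𝔤₁` with orthonormal basis `{W, X₁, …, X_{n+1}}` (here `e 0 = W`, `e k = X_k`) and
brackets `[W, X_k] = X_{k+1}` for `k = 1, …, n`, all other basis brackets zero, the
subspace `𝔳 = span{X₂, …, X_{n+1}}` is (a) a subalgebra of codimension 2, (b) it
satisfies the conformal condition with `ν = 0`, but (c) the totally geodesic condition
fails: `⟨[W,X₂],X₃⟩ + ⟨[W,X₃],X₂⟩ = 1 ≠ 0`. -/
theorem ex61_conformal_notTotGeod (n : ℕ) (hn : 2 ≤ n)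
    (e : Fin (n + 2) → EuclideanSpace ℝ (Fin (n + 2)))
    (he : ∀ i, e i = EuclideanSpace.single i 1)
    (br : EuclideanSpace ℝ (Fin (n + 2)) →ₗ[ℝ] EuclideanSpace ℝ (Fin (n + 2)) →ₗ[ℝ]
      EuclideanSpace ℝ (Fin (n + 2)))
    (halt : ∀ x, br x x = 0)
    (hjac : ∀ x y z, br (br x y) z + br (br y z) x + br (br z x) y = 0)
    (hbr1 : ∀ (k : ℕ) (h1 : 1 ≤ k) (h2 : k ≤ n),
      br (e 0) (e ⟨k, by omega⟩) = e ⟨k + 1, by omega⟩)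
    (hbr2 : br (e 0) (e ⟨n + 1, by omega⟩) = 0)
    (hbr3 : ∀ i j : Fin (n + 2), 1 ≤ (i : ℕ) → 1 ≤ (j : ℕ) → br (e i) (e j) = 0) :
    let 𝔳 : Submodule ℝ (EuclideanSpace ℝ (Fin (n + 2))) :=
      Submodule.span ℝ {x | ∃ i : Fin (n + 2), 2 ≤ (i : ℕ) ∧ x = e i}
    let 𝔥 : Submodule ℝ (EuclideanSpace ℝ (Fin (n + 2))) :=
      Submodule.span ℝ {e 0, e 1}
    -- (a) 𝔳 is a Lie subalgebra of codimension 2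
    (∀ u ∈ 𝔳, ∀ v ∈ 𝔳, br u v ∈ 𝔳) ∧ Module.finrank ℝ 𝔳 + 2 = n + 2 ∧
    -- (b) conformal condition with ν = 0
    (∀ v ∈ 𝔳, ∀ x ∈ 𝔥, ∀ y ∈ 𝔥, ⟪br v x, y⟫ + ⟪br v y, x⟫ = 0) ∧
    -- (c) totally geodesic condition fails
    (⟪br (e 0) (e ⟨2, by omega⟩), e ⟨3, by omega⟩⟫ +
      ⟪br (e 0) (e ⟨3, by omega⟩), e ⟨2, by omega⟩⟫ = 1 ∧ (1 : ℝ) ≠ 0) := by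
  intro 𝔳 𝔥
  have hVmem : ∀ i : Fin (n + 2), 2 ≤ (i : ℕ) → e i ∈ 𝔳 := fun i hi =>
    Submodule.subset_span ⟨i, hi, rfl⟩
  -- antisymmetry of the bracket
  have hanti : ∀ x y, br x y = - br y x := by
    intro x y
    have h := halt (x + y)
    simp only [map_add, LinearMap.add_apply, halt, zero_add, add_zero] at h
    exact eq_neg_of_add_eq_zero_right h
  -- (a) subalgebra: all brackets of elements of 𝔳 vanish
  have hbr0 : ∀ u ∈ 𝔳, ∀ v ∈ 𝔳, br u v = 0 := by
    have h1 : ∀ i : Fin (n + 2), 2 ≤ (i : ℕ) → ∀ v ∈ 𝔳, br (e i) v = 0 := by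
      intro i hi v hv
      have hle : 𝔳 ≤ LinearMap.ker (br (e i)) := by
        rw [Submodule.span_le]
        rintro x ⟨j, hj, rfl⟩
        simpa [LinearMap.mem_ker] using hbr3 i j (by omega) (by omega)
      simpa using hle hv
    intro u hu v hv
    have hle : 𝔳 ≤ LinearMap.ker (br.flip v) := by
      rw [Submodule.span_le]
      rintro x ⟨j, hj, rfl⟩
      simpa [LinearMap.mem_ker] using h1 j hj v hv
    simpa using hle hu
  -- coordinates 0 and 1 of elements of 𝔳 vanish
  have hcoord : ∀ v ∈ 𝔳, v 0 = 0 ∧ v 1 = 0 := by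
    intro v hv
    induction hv using Submodule.span_induction with
    | mem x hx =>
      obtain ⟨i, hi, rfl⟩ := hx
      constructor <;>
        · rw [he]
          rw [EuclideanSpace.single_apply, if_neg]
          intro h
          rw [Fin.ext_iff] at h
          simp at h
          omega
    | zero => simp
    | add x y hx hy ihx ihy =>
      refine ⟨?_, ?_⟩ <;> simp [PiLp.add_apply, ihx.1, ihx.2, ihy.1, ihy.2]
    | smul a x hx ihx =>
      refine ⟨?_, ?_⟩ <;> simp [PiLp.smul_apply, ihx.1, ihx.2]
  -- elements of 𝔳 are orthogonal to elements of 𝔥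
  have horth : ∀ v ∈ 𝔳, ∀ y ∈ 𝔥, ⟪v, y⟫ = 0 := by
    intro v hv y hy
    obtain ⟨c, d, rfl⟩ := Submodule.mem_span_pair.mp hy
    rw [inner_add_right, real_inner_smul_right, real_inner_smul_right, he 0, he 1,
      EuclideanSpace.inner_single_right, EuclideanSpace.inner_single_right]
    simp [(hcoord v hv).1, (hcoord v hv).2]
  -- bracketing an element of 𝔳 with an element of 𝔥 lands in 𝔳
  have hbrV : ∀ v ∈ 𝔳, ∀ x ∈ 𝔥, br v x ∈ 𝔳 := by
    intro v hv x hx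
    have hle : 𝔳 ≤ Submodule.comap (br.flip x) 𝔳 := by
      rw [Submodule.span_le]
      rintro z ⟨i, hi, rfl⟩
      obtain ⟨c, d, rfl⟩ := Submodule.mem_span_pair.mp hx
      simp only [SetLike.mem_coe, Submodule.mem_comap, map_add, map_smul,
        LinearMap.add_apply, LinearMap.smul_apply, LinearMap.flip_apply]
      have h1 : br (e i) (e 1) = 0 := by
        exact hbr3 i 1 (by omega) (Fin.val_one n).symm.le
      have h0 : br (e i) (e 0) ∈ 𝔳 := by
        rw [hanti]
        by_cases hin : (i : ℕ) ≤ n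
        · have hi' : i = ⟨(i : ℕ), by omega⟩ := Fin.ext rfl
          rw [hi', hbr1 (i : ℕ) (by omega) hin]
          exact Submodule.neg_mem _ (hVmem ⟨(i : ℕ) + 1, by omega⟩
            (show 2 ≤ (i : ℕ) + 1 by omega))
        · have hi' : i = ⟨n + 1, by omega⟩ := Fin.ext (show (i : ℕ) = n + 1 by omega)
          rw [hi', hbr2, neg_zero]
          exact Submodule.zero_mem _
      rw [h1, smul_zero, add_zero]
      exact Submodule.smul_mem _ c h0
    simpa using hle hv
  refine ⟨fun u hu v hv => by rw [hbr0 u hu v hv]; exact Submodule.zero_mem _, ?_, ?_, ?_, ?_⟩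
  · -- finrank
    have hset : {x | ∃ i : Fin (n + 2), 2 ≤ (i : ℕ) ∧ x = e i} =
        Set.range (fun j : Fin n => e ⟨(j : ℕ) + 2, by omega⟩) := by
      ext x
      constructor
      · rintro ⟨i, hi, rfl⟩
        have hieq : (⟨(i : ℕ) - 2 + 2, by omega⟩ : Fin (n + 2)) = i :=
          Fin.ext (show (i : ℕ) - 2 + 2 = (i : ℕ) by omega)
        exact ⟨⟨(i : ℕ) - 2, by omega⟩, congrArg e hieq⟩
      · rintro ⟨j, rfl⟩
        exact ⟨⟨(j : ℕ) + 2, by omega⟩, show 2 ≤ (j : ℕ) + 2 by omega, rfl⟩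
    have hee : e = fun i => (EuclideanSpace.basisFun (Fin (n + 2)) ℝ) i := by
      funext i
      rw [he, EuclideanSpace.basisFun_apply]
    have hlie : LinearIndependent ℝ e := by
      rw [hee]
      exact (EuclideanSpace.basisFun (Fin (n + 2)) ℝ).toBasis.linearIndependent
    have hlif : LinearIndependent ℝ (fun j : Fin n => e ⟨(j : ℕ) + 2, by omega⟩) := by
      refine hlie.comp (fun j : Fin n => ⟨(j : ℕ) + 2, by omega⟩) ?_
      intro a b hab
      rw [Fin.ext_iff] at hab ⊢
      simpa using hab
    have hspan : 𝔳 = Submodule.span ℝ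
        (Set.range (fun j : Fin n => e ⟨(j : ℕ) + 2, by omega⟩)) :=
      congrArg (Submodule.span ℝ) hset
    rw [hspan, finrank_span_eq_card hlif, Fintype.card_fin]
  · -- (b)
    intro v hv x hx y hy
    rw [horth _ (hbrV v hv x hx) y hy, horth _ (hbrV v hv y hy) x hx]
    norm_num
  · -- (c) value is 1
    have h2 : br (e 0) (e ⟨2, by omega⟩) = e ⟨3, by omega⟩ := hbr1 2 (by omega) hn
    have h33 : ⟪e ⟨3, by omega⟩, e (⟨3, by omega⟩ : Fin (n + 2))⟫ = (1 : ℝ) := by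
      simp [he, EuclideanSpace.inner_single_right, EuclideanSpace.single_apply]
    have hsecond : ⟪br (e 0) (e ⟨3, by omega⟩), e (⟨2, by omega⟩ : Fin (n + 2))⟫ = (0 : ℝ) := by
      by_cases h3 : 3 ≤ n
      · rw [hbr1 3 (by omega) h3]
        simp only [he, EuclideanSpace.inner_single_right, EuclideanSpace.single_apply,
          Fin.ext_iff, Fin.val_mk, map_one, one_mul]
        rw [if_neg (by omega)]
        simp
      · have hn2 : n = 2 := by omega
        have hix : (⟨3, by omega⟩ : Fin (n + 2)) = ⟨n + 1, by omega⟩ :=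
          Fin.ext (show (3 : ℕ) = n + 1 by omega)
        rw [hix, hbr2, inner_zero_left]
    rw [h2, h33, hsecond]
    norm_num
  · exact one_ne_zero
end
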